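/- arXiv:2003.05749 — 3 statements merged into one kernel-verified Lean document; each statement's English description precedes it below -/
import Mathlib

section
/- For all real numbers α, β with α ≠ 0, the Lorentzian Lie algebra (𝔤₁, g, J) is not a first kind algebraic Wanas soliton associated to the canonical connection ∇⁰; that is, there exist no real number c and no derivation D : 𝔤₁ → 𝔤₁ such that Wan⁰ = c·Id + D. -/
/-!
Since `g` is nondegenerate, `w⁰ = g(Wan⁰ ·, ·)` determines `Wan⁰`, so a soliton derivation would be
the explicit matrix `D = Wan⁰ - c·Id`. The `e₃`-component of the derivation identity on `(e₁, e₃)`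
forces `α²β = 0`, hence `β = 0`; the identity on `(e₂, e₃)` then gives `c = 0` and `α³ = 0`.
-/

noncomputable section

/-- The underlying vector space `ℝ³`. -/
abbrev V : Type := Fin 3 → ℝ

/-- The basis vector `e₁`. -/
def e1 : V := ![1, 0, 0]

/-- The basis vector `e₂`. -/
def e2 : V := ![0, 1, 0]

/-- The basis vector `e₃`. -/
def e3 : V := ![0, 0, 1]

/-- The Lorentzian metric `g` with `g(e₁,e₁) = g(e₂,e₂) = 1`, `g(e₃,e₃) = -1`. -/
def g (x y : V) : ℝ := x 0 * y 0 + x 1 * y 1 - x 2 * y 2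

/-- The Lie bracket. -/
def br (α β : ℝ) (x y : V) : V :=
  (x 0 * y 1 - x 1 * y 0) • (α • e1 - β • e3) + (x 0 * y 2 - x 2 * y 0) • (-(α • e1) - β • e2) +
    (x 1 * y 2 - x 2 * y 1) • (β • e1 + α • e2 + α • e3)

/-- The canonical connection `∇⁰`. -/
def nab (α β : ℝ) (x y : V) : V :=
  (x 0 * y 0) • (-(α • e2)) + (x 0 * y 1) • (α • e1) + (x 2 * y 0) • ((β / 2) • e2) +
    (x 2 * y 1) • (-((β / 2) • e1))

/-- The torsion `T⁰(X,Y) = ∇⁰_X Y - ∇⁰_Y X - [X,Y]`. -/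
def T (α β : ℝ) (x y : V) : V := nab α β x y - nab α β y x - br α β x y

/-- The tensor `A⁰(X,Y)Z = T⁰(T⁰(X,Y),Z)`. -/
def A (α β : ℝ) (x y z : V) : V := T α β (T α β x y) z

/-- The curvature `R⁰(X,Y)Z = ∇⁰_X ∇⁰_Y Z - ∇⁰_Y ∇⁰_X Z - ∇⁰_{[X,Y]} Z`. -/
def Rc (α β : ℝ) (x y z : V) : V :=
  nab α β x (nab α β y z) - nab α β y (nab α β x z) - nab α β (br α β x y) z

/-- The Wanas tensor `W⁰(X,Y)Z = R⁰(X,Y)Z - A⁰(X,Y)Z`. -/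
def W (α β : ℝ) (x y z : V) : V := Rc α β x y z - A α β x y z

/-- `w⁰(X,Y) = -g(W⁰(X,e₁)Y,e₁) - g(W⁰(X,e₂)Y,e₂) + g(W⁰(X,e₃)Y,e₃)`. -/
def w (α β : ℝ) (x y : V) : ℝ :=
  -g (W α β x e1 y) e1 - g (W α β x e2 y) e2 + g (W α β x e3 y) e3

/-- `w̃⁰(X,Y) = (w⁰(X,Y) + w⁰(Y,X))/2`. -/
def wt (α β : ℝ) (x y : V) : ℝ := (w α β x y + w α β y x) / 2

/-- `D` is a derivation of the Lie algebra. -/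
def IsDeriv (α β : ℝ) (D : V →ₗ[ℝ] V) : Prop :=
  ∀ x y, D (br α β x y) = br α β (D x) y + br α β x (D y)

lemma eq_vec_g_basis (v : V) : v = ![g v e1, g v e2, -g v e3] := by
  ext i
  fin_cases i <;> simp [g, e1, e2, e3]

lemma w_apply (α β : ℝ) (x y : V) : w α β x y =
    (-α ^ 2 - 3 / 2 * β ^ 2) * x 0 * y 0 + 2 * α * β * x 0 * y 1 - α * β / 2 * x 0 * y 2 +
      2 * α * β * x 1 * y 0 + (-2 * α ^ 2 - 3 / 2 * β ^ 2) * x 1 * y 1 + α ^ 2 * x 1 * y 2 +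
      2 * α ^ 2 * x 2 * y 1 + (-2 * α ^ 2 + β ^ 2 / 2) * x 2 * y 2 := by
  simp only [w, W, Rc, A, T, nab, br, g, e1, e2, e3, Pi.add_apply, Pi.neg_apply, Pi.smul_apply,
    Pi.sub_apply, smul_eq_mul, Matrix.cons_val_zero, Matrix.cons_val_one, Matrix.cons_val]
  ring

lemma br_e1_e3 (α β : ℝ) : br α β e1 e3 = (-α) • e1 + (-β) • e2 := by
  ext i
  fin_cases i <;> simp [br, e1, e2, e3]

lemma br_e2_e3 (α β : ℝ) : br α β e2 e3 = β • e1 + α • e2 + α • e3 := by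
  ext i
  fin_cases i <;> simp [br, e1, e2, e3]

lemma IsDeriv.linear_relations {α β : ℝ} {D : V →ₗ[ℝ] V} (hD : IsDeriv α β D) :
    α * (D e1 1 + D e1 2) + β * (D e2 2 - D e3 1) = 0 ∧
      β * (D e1 1 + D e2 0) + α * (D e3 1 - D e3 2) = 0 ∧
      β * (D e1 2 - D e3 0) + α * (D e2 2 - D e2 1) = 0 := by
  have h13 := congrFun (hD e1 e3) 2
  have h23₁ := congrFun (hD e2 e3) 1
  have h23₂ := congrFun (hD e2 e3) 2
  simp only [br_e1_e3, br_e2_e3, map_add, map_smul] at h13 h23₁ h23₂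
  generalize D e1 = a at *
  generalize D e2 = b at *
  generalize D e3 = t at *
  simp only [br, e1, e2, e3, Pi.add_apply, Pi.neg_apply, Pi.smul_apply, Pi.sub_apply, smul_eq_mul,
    Matrix.cons_val_zero, Matrix.cons_val_one, Matrix.cons_val]
    at h13 h23₁ h23₂
  refine ⟨?_, ?_, ?_⟩ <;> linarith

theorem g1_not_first_kind_algebraic_Wanas_soliton (α β : ℝ) (hα : α ≠ 0)
    (Wan : V →ₗ[ℝ] V) (hWan : ∀ x y, w α β x y = g (Wan x) y) :
    ¬ ∃ (c : ℝ) (D : V →ₗ[ℝ] V), IsDeriv α β D ∧ ∀ x, Wan x = c • x + D x := by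
  rintro ⟨c, D, hD, hWanD⟩
  have hWan_apply : ∀ x, Wan x = ![w α β x e1, w α β x e2, -w α β x e3] := fun x => by
    rw [eq_vec_g_basis (Wan x), ← hWan, ← hWan, ← hWan]
  have hD_apply : ∀ x, D x = Wan x - c • x := fun x => by rw [hWanD]; abel
  obtain ⟨h13, h23₁, h23₂⟩ := hD.linear_relations
  simp only [hD_apply, hWan_apply, w_apply, e1, e2, e3, Pi.sub_apply, Pi.smul_apply, smul_eq_mul,
    Matrix.cons_val_zero, Matrix.cons_val_one, Matrix.cons_val] at h13 h23₁ h23₂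
  have hβ : β = 0 := by
    have : α ^ 2 * β = 0 := by linear_combination -2 * h13
    simpa [hα] using this
  subst hβ
  have hc : c = 0 := by simpa [hα] using h23₁
  subst hc
  have : α ^ 3 = 0 := by linear_combination h23₂
  exact hα (pow_eq_zero_iff three_ne_zero |>.mp this)
end
end

section
/- For all real numbers α, β with α ≠ 0, the Lorentzian Lie algebra (𝔤₁, g, J) is not a second kind algebraic Wanas soliton associated to the canonical connection ∇⁰; that is, there exist no real number c and no derivation D : 𝔤₁ → 𝔤₁ such that W̃an⁰ = c·Id + D. -/
noncomputable section

lemma ee10 : e1 0 = 1 := rfl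
lemma ee11 : e1 1 = 0 := rfl
lemma ee12 : e1 2 = 0 := rfl
lemma ee20 : e2 0 = 0 := rfl
lemma ee21 : e2 1 = 1 := rfl
lemma ee22 : e2 2 = 0 := rfl
lemma ee30 : e3 0 = 0 := rfl
lemma ee31 : e3 1 = 0 := rfl
lemma ee32 : e3 2 = 1 := rfl

set_option maxHeartbeats 1000000 in
lemma hw (α β : ℝ) (x y : V) : wt α β x y =
    (-α^2-3/2*β^2)*(x 0*y 0) + 2*α*β*(x 0*y 1 + x 1*y 0) + (-1/4*α*β)*(x 0*y 2 + x 2*y 0)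
      + (-2*α^2-3/2*β^2)*(x 1*y 1) + 3/2*α^2*(x 1*y 2 + x 2*y 1)
      + (-2*α^2+1/2*β^2)*(x 2*y 2) := by
  simp only [wt, w, W, Rc, A, T, nab, br, g, Pi.add_apply, Pi.sub_apply, Pi.smul_apply,
    Pi.neg_apply, smul_eq_mul, ee10, ee11, ee12, ee20, ee21, ee22, ee30, ee31, ee32]
  ring

set_option maxHeartbeats 1000000 in
theorem g1_not_second_kind_algebraic_Wanas_soliton (α β : ℝ) (hα : α ≠ 0)
    (tWan : V →ₗ[ℝ] V) (htWan : ∀ x y, wt α β x y = g (tWan x) y) :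
    ¬ ∃ (c : ℝ) (D : V →ₗ[ℝ] V), IsDeriv α β D ∧ ∀ x, tWan x = c • x + D x := by
  rintro ⟨c, D, hD, hsum⟩
  have hDx : ∀ x, D x = tWan x - c • x := by
    intro x; rw [hsum x]; abel
  have h11 : tWan e1 0 = -α^2 - 3/2*β^2 := by
    have h := htWan e1 e1
    rw [hw] at h
    norm_num [g, ee10, ee11, ee12, ee20, ee21, ee22, ee30, ee31, ee32] at h
    linarith
  have h12 : tWan e1 1 = 2*α*β := by
    have h := htWan e1 e2
    rw [hw] at h
    norm_num [g, ee10, ee11, ee12, ee20, ee21, ee22, ee30, ee31, ee32] at h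
    linarith
  have h13 : tWan e1 2 = α*β/4 := by
    have h := htWan e1 e3
    rw [hw] at h
    norm_num [g, ee10, ee11, ee12, ee20, ee21, ee22, ee30, ee31, ee32] at h
    linarith
  have h21 : tWan e2 0 = 2*α*β := by
    have h := htWan e2 e1
    rw [hw] at h
    norm_num [g, ee10, ee11, ee12, ee20, ee21, ee22, ee30, ee31, ee32] at h
    linarith
  have h22 : tWan e2 1 = -2*α^2 - 3/2*β^2 := by
    have h := htWan e2 e2
    rw [hw] at h
    norm_num [g, ee10, ee11, ee12, ee20, ee21, ee22, ee30, ee31, ee32] at h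
    linarith
  have h23 : tWan e2 2 = -3/2*α^2 := by
    have h := htWan e2 e3
    rw [hw] at h
    norm_num [g, ee10, ee11, ee12, ee20, ee21, ee22, ee30, ee31, ee32] at h
    linarith
  have h31 : tWan e3 0 = -α*β/4 := by
    have h := htWan e3 e1
    rw [hw] at h
    norm_num [g, ee10, ee11, ee12, ee20, ee21, ee22, ee30, ee31, ee32] at h
    linarith
  have h32 : tWan e3 1 = 3/2*α^2 := by
    have h := htWan e3 e2
    rw [hw] at h
    norm_num [g, ee10, ee11, ee12, ee20, ee21, ee22, ee30, ee31, ee32] at h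
    linarith
  have h33 : tWan e3 2 = 2*α^2 - β^2/2 := by
    have h := htWan e3 e3
    rw [hw] at h
    norm_num [g, ee10, ee11, ee12, ee20, ee21, ee22, ee30, ee31, ee32] at h
    linarith
  have hDe1 : D e1 = ![-α^2 - 3/2*β^2 - c, 2*α*β, α*β/4] := by
    rw [hDx]; funext j; fin_cases j <;>
      simp [h11, h12, h13, ee10, ee11, ee12]
  have hDe2 : D e2 = ![2*α*β, -2*α^2 - 3/2*β^2 - c, -3/2*α^2] := by
    rw [hDx]; funext j; fin_cases j <;>
      simp [h21, h22, h23, ee20, ee21, ee22]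
  have hDe3 : D e3 = ![-α*β/4, 3/2*α^2, 2*α^2 - β^2/2 - c] := by
    rw [hDx]; funext j; fin_cases j <;>
      simp [h31, h32, h33, ee30, ee31, ee32]
  have hbr12 : br α β e1 e2 = α • e1 + (-β) • e3 := by
    funext j; fin_cases j <;>
      simp [br, ee10, ee11, ee12, ee20, ee21, ee22, ee30, ee31, ee32]
  have hbr13 : br α β e1 e3 = (-α) • e1 + (-β) • e2 := by
    funext j; fin_cases j <;>
      simp [br, ee10, ee11, ee12, ee20, ee21, ee22, ee30, ee31, ee32]
  have heq12 := hD e1 e2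
  rw [hbr12, map_add, map_smul, map_smul, hDe1, hDe2, hDe3] at heq12
  have heq13 := hD e1 e3
  rw [hbr13, map_add, map_smul, map_smul, hDe1, hDe2, hDe3] at heq13
  have E1 := congrFun heq12 0
  have E2 := congrFun heq12 1
  have F1 := congrFun heq13 0
  simp [br, ee10, ee11, ee12, ee20, ee21, ee22, ee30, ee31, ee32] at E1 E2 F1
  have hb : β = 0 := by
    have h2 : α^2*β = 0 := by linear_combination (-4/3) * E2
    rcases mul_eq_zero.mp h2 with h | h
    · exact absurd (pow_eq_zero_iff (by norm_num)|>.mp h) hα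
    · exact h
  have h3 : α^3 = 0 := by
    rw [hb] at E1 F1; linear_combination E1 + F1
  exact hα (pow_eq_zero_iff (by norm_num)|>.mp h3)
end
end

section
/- For 𝔤₁ with parameters α, β ∈ ℝ (α ≠ 0), the tensor A⁰ of the canonical connection ∇⁰ satisfies: A⁰(e₁,e₂)e₁ = −αβe₁ − (β²/2)e₂; A⁰(e₁,e₂)e₂ = (β²/2)e₁ + αβe₂ + αβe₃; A⁰(e₁,e₂)e₃ = 0; A⁰(e₁,e₃)e₁ = −(β²/2)e₃; A⁰(e₁,e₃)e₂ = αβe₃; A⁰(e₁,e₃)e₃ = (α² − β²/4)e₁ − (αβ/2)e₃; A⁰(e₂,e₃)e₁ = α²e₁ + (αβ/2)e₂ + αβe₃; A⁰(e₂,e₃)e₂ = −(αβ/2)e₁ − α²e₂ − (α² + β²/2)e₃; A⁰(e₂,e₃)e₃ = (α² − β²/4)e₂ + α²e₃. -/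
noncomputable section

theorem g1_A_tensor (α β : ℝ) (hα : α ≠ 0) :
    A α β e1 e2 e1 = -((α * β) • e1) - (β ^ 2 / 2) • e2 ∧
    A α β e1 e2 e2 = (β ^ 2 / 2) • e1 + (α * β) • e2 + (α * β) • e3 ∧
    A α β e1 e2 e3 = 0 ∧
    A α β e1 e3 e1 = -((β ^ 2 / 2) • e3) ∧
    A α β e1 e3 e2 = (α * β) • e3 ∧
    A α β e1 e3 e3 = (α ^ 2 - β ^ 2 / 4) • e1 - (α * β / 2) • e3 ∧
    A α β e2 e3 e1 = α ^ 2 • e1 + (α * β / 2) • e2 + (α * β) • e3 ∧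
    A α β e2 e3 e2 = -((α * β / 2) • e1) - α ^ 2 • e2 - (α ^ 2 + β ^ 2 / 2) • e3 ∧
    A α β e2 e3 e3 = (α ^ 2 - β ^ 2 / 4) • e2 + α ^ 2 • e3 := by
  refine ⟨?_, ?_, ?_, ?_, ?_, ?_, ?_, ?_, ?_⟩ <;>
    · funext i
      fin_cases i <;>
        simp [A, T, nab, br, e1, e2, e3, Matrix.cons_val_zero, Matrix.cons_val_one] <;> ring
end
end
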